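/- arXiv:1109.0413 — 3 statements merged into one kernel-verified Lean document; each statement's English description precedes it below -/
import Mathlib

section
/- Let d be an integer that is not a perfect square, and let a, b, c, a', b', c' be integers with b^2 - 4ac = (b')^2 - 4a'c' = d. If 2bb' - 4ac' - 4a'c = ±2d, then d·(a' ∓ a)^2 = (a'b - ab')^2, so d is a perfect square or a'b = ab' and a' = ±a. -/
/-- If two integral binary quadratic forms `(a,b,c)`, `(a',b',c')` have the same
non-square discriminant `d` and their polarized pairing
`2bb' - 4ac' - 4a'c` equals `ε·2d` (with `ε = ±1`), then
`d·(a' - εa)² = (a'b - ab')²`; hence `d` is a perfect square or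
`a'b = ab'` and `a' = εa`.  In particular, for non-square `d` the pairing being
`±2d` forces this degenerate proportionality. -/
theorem pairing_ne_pm_two_disc (d a b c a' b' c' ε : ℤ)
    (hd : ¬∃ k : ℤ, d = k ^ 2)
    (h1 : b ^ 2 - 4 * a * c = d) (h2 : b' ^ 2 - 4 * a' * c' = d)
    (hε : ε = 1 ∨ ε = -1)
    (hp : 2 * b * b' - 4 * a * c' - 4 * a' * c = ε * (2 * d)) :
    d * (a' - ε * a) ^ 2 = (a' * b - a * b') ^ 2 ∧
      ((∃ k : ℤ, d = k ^ 2) ∨ (a' * b = a * b' ∧ a' = ε * a)) := by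
  have key : d * (a' - ε * a) ^ 2 = (a' * b - a * b') ^ 2 := by
    rcases hε with rfl | rfl <;> linear_combination (-(a' ^ 2)) * h1 - a ^ 2 * h2 + a * a' * hp
  refine ⟨key, Or.inr ?_⟩
  have hsz : a' - ε * a = 0 := by
    by_contra hs
    apply hd
    have hdvd : (a' - ε * a) ∣ (a' * b - a * b') := by
      have : (a' - ε * a) ^ 2 ∣ (a' * b - a * b') ^ 2 := ⟨d, by linarith [key]⟩
      exact (Int.pow_dvd_pow_iff (by norm_num)).mp this
    obtain ⟨k, hk⟩ := hdvd
    refine ⟨k, ?_⟩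
    have h2z : (a' - ε * a) ^ 2 ≠ 0 := pow_ne_zero _ hs
    have : d * (a' - ε * a) ^ 2 = k ^ 2 * (a' - ε * a) ^ 2 := by
      rw [key, hk]; ring
    exact mul_right_cancel₀ h2z this
  have ht : (a' * b - a * b') ^ 2 = 0 := by rw [← key, hsz]; ring
  have := pow_eq_zero_iff (n := 2) (by norm_num) |>.mp ht
  constructor
  · linarith
  · linarith
end

section
/- If μ is a T-invariant probability measure, 𝒬 is a finite partition refining 𝒫 (every atom of 𝒬 is contained in an atom of 𝒫), and every atom S of 𝒫 contained in a fixed measurable set X' is split by 𝒬 into at most M pieces, while atoms of 𝒫 outside X' are not split, then H_μ(𝒬 | 𝒫) ≤ μ(X') · log M ≤ log M. -/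
/-!
On an atom `P` of `𝒫`, the conditional term is `μ(P)` times the entropy of the distribution of
`μ(· | P)` over the pieces of `𝒬`; by concavity of `log` it is at most `μ(P) · log n`, where `n`
is the number of pieces of positive measure. An unsplit atom has `n = 1` and contributes nothing,
an atom inside `X'` has `n ≤ M`, and the atoms inside `X'` are disjoint subsets of `X'`.
-/

open MeasureTheory Finset Real

theorem sum_mul_log_sum_div_le_mul_log_card {κ : Type*} {s : Finset κ} {a : κ → ℝ}
    (ha : ∀ j ∈ s, 0 < a j) :
    ∑ j ∈ s, a j * log ((∑ k ∈ s, a k) / a j) ≤ (∑ k ∈ s, a k) * log #s := by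
  set m := ∑ k ∈ s, a k
  rcases s.eq_empty_or_nonempty with rfl | hs
  · simp
  have hm : 0 < m := sum_pos ha hs
  have jensen := strictConcaveOn_log_Ioi.concaveOn.le_map_sum (t := s) (w := fun j => a j / m)
    (p := fun j => m / a j) (fun j hj => (div_pos (ha j hj) hm).le)
    (by rw [← sum_div, div_self hm.ne']) (fun j hj => div_pos hm (ha j hj))
  have hcancel : ∀ j ∈ s, a j / m * (m / a j) = 1 := fun j hj => by
    field_simp [(ha j hj).ne', hm.ne']
  simp only [smul_eq_mul, sum_congr rfl hcancel, sum_const, nsmul_eq_mul, mul_one] at jensen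
  calc ∑ j ∈ s, a j * log (m / a j) = m * ∑ j ∈ s, a j / m * log (m / a j) := by
        rw [mul_sum]; exact sum_congr rfl fun j _ => by field_simp
    _ ≤ m * log #s := by gcongr

theorem neg_sum_mul_log_div_sum_le {κ : Type*} {s : Finset κ} {a : κ → ℝ}
    (ha : ∀ j ∈ s, 0 ≤ a j) {N : ℕ} (hN : #{j ∈ s | a j ≠ 0} ≤ N) :
    -∑ j ∈ s, a j * log (a j / ∑ k ∈ s, a k) ≤ (∑ k ∈ s, a k) * log N := by
  set t := {j ∈ s | a j ≠ 0}
  have hpos : ∀ j ∈ t, 0 < a j := fun j hj =>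
    (ha j (mem_filter.1 hj).1).lt_of_ne' (mem_filter.1 hj).2
  have hsum : ∑ k ∈ s, a k = ∑ k ∈ t, a k := (sum_filter_ne_zero s).symm
  have hlhs : -∑ j ∈ s, a j * log (a j / ∑ k ∈ t, a k)
      = ∑ j ∈ t, a j * log ((∑ k ∈ t, a k) / a j) := by
    rw [← sum_filter_of_ne (p := fun j => a j ≠ 0) fun j _ h hj => by simp [hj] at h,
      ← sum_neg_distrib]
    exact sum_congr rfl fun j _ => by rw [← inv_div, log_inv, mul_neg, neg_neg]
  rw [hsum, hlhs]
  rcases t.eq_empty_or_nonempty with ht | ht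
  · simp [ht]
  refine (sum_mul_log_sum_div_le_mul_log_card hpos).trans ?_
  gcongr
  exact (sum_pos hpos ht).le

theorem subset_of_inter_nonempty {X ι κ : Type*} {P : ι → Set X} {Q : κ → Set X}
    (hdP : Pairwise (Function.onFun Disjoint P)) (hrefine : ∀ j, ∃ i, Q j ⊆ P i) {i : ι} {j : κ}
    (h : (Q j ∩ P i).Nonempty) : Q j ⊆ P i := by
  obtain ⟨i', hi'⟩ := hrefine j
  obtain rfl : i' = i := by
    by_contra hne
    obtain ⟨x, hxQ, hxP⟩ := h
    exact (hdP hne).le_bot ⟨hi' hxQ, hxP⟩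
  exact hi'

section Partition

variable {X κ : Type*} [MeasurableSpace X] {Q : κ → Set X}

theorem measureReal_eq_sum_measureReal_inter [Fintype κ] {μ : Measure X} [IsFiniteMeasure μ]
    (hmQ : ∀ j, MeasurableSet (Q j)) (hdQ : Pairwise (Function.onFun Disjoint Q))
    (hcQ : ⋃ j, Q j = Set.univ) {A : Set X} (hA : MeasurableSet A) :
    μ.real A = ∑ j, μ.real (Q j ∩ A) := by
  rw [← measureReal_iUnion_fintype (fun j j' h => (hdQ h).mono Set.inter_subset_left
    Set.inter_subset_left) fun j => (hmQ j).inter hA, ← Set.iUnion_inter, hcQ, Set.univ_inter]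

theorem card_measureReal_inter_ne_zero_le_card_subset [Fintype κ] {ι : Type*} {P : ι → Set X}
    (μ : Measure X) (hdP : Pairwise (Function.onFun Disjoint P))
    (hrefine : ∀ j, ∃ i, Q j ⊆ P i) (i : ι) :
    #{j | μ.real (Q j ∩ P i) ≠ 0} ≤ Nat.card {j : κ // Q j ⊆ P i ∧ Q j ≠ ∅} := by
  classical
  rw [Nat.card_eq_fintype_card, Fintype.card_subtype]
  refine card_le_card fun j hj => ?_
  have hne : (Q j ∩ P i).Nonempty := nonempty_of_measureReal_ne_zero (mem_filter.1 hj).2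
  exact mem_filter.2 ⟨mem_univ j, subset_of_inter_nonempty hdP hrefine hne,
    (hne.mono Set.inter_subset_left).ne_empty⟩

theorem card_measureReal_inter_ne_zero_le_one [Fintype κ] (μ : Measure X)
    (hdQ : Pairwise (Function.onFun Disjoint Q)) {j₀ : κ} :
    #{j | μ.real (Q j ∩ Q j₀) ≠ 0} ≤ 1 := by
  refine card_le_one.2 fun j hj j' hj' => ?_
  have hself : ∀ {k}, k ∈ ({j | μ.real (Q j ∩ Q j₀) ≠ 0} : Finset κ) → k = j₀ := fun hk => by
    by_contra hne
    simp [(hdQ hne).inter_eq] at hk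
  rw [hself hj, hself hj']

theorem sum_measureReal_le_of_forall_subset {ι : Type*} {μ : Measure X} [IsFiniteMeasure μ]
    {P : ι → Set X} (hmP : ∀ i, MeasurableSet (P i)) (hdP : Pairwise (Function.onFun Disjoint P))
    {s : Finset ι} {A : Set X} (hsA : ∀ i ∈ s, P i ⊆ A) :
    ∑ i ∈ s, μ.real (P i) ≤ μ.real A := by
  rw [← measureReal_biUnion_finset (hdP.set_pairwise _) fun i _ => hmP i]
  exact measureReal_mono (Set.iUnion₂_subset hsA)

end Partition

theorem conditional_entropy_of_bounded_splitting_general {X : Type*} [MeasurableSpace X]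
    (μ : Measure X) [IsProbabilityMeasure μ]
    {ι κ : Type*} [Fintype ι] [Fintype κ]
    (P : ι → Set X) (Q : κ → Set X)
    (hmP : ∀ i, MeasurableSet (P i)) (hmQ : ∀ j, MeasurableSet (Q j))
    (hdP : Pairwise (Function.onFun Disjoint P))
    (hdQ : Pairwise (Function.onFun Disjoint Q))
    (hcQ : (⋃ j, Q j) = Set.univ)
    (X' : Set X)
    (M : ℕ)
    (hrefine : ∀ j, ∃ i, Q j ⊆ P i)
    (hsplit : ∀ i, P i ⊆ X' → Nat.card {j : κ // Q j ⊆ P i ∧ Q j ≠ ∅} ≤ M)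
    (hnosplit : ∀ i, ¬P i ⊆ X' → ∃ j, Q j = P i) :
    (-∑ j, ∑ i, (μ (Q j ∩ P i)).toReal *
        Real.log ((μ (Q j ∩ P i)).toReal / (μ (P i)).toReal))
        ≤ (μ X').toReal * Real.log M ∧
      (μ X').toReal * Real.log M ≤ Real.log M := by
  classical
  simp only [← measureReal_def]
  refine ⟨?_, mul_le_of_le_one_left (log_natCast_nonneg M) measureReal_le_one⟩
  have hatom (i : ι) : -∑ j, μ.real (Q j ∩ P i) * log (μ.real (Q j ∩ P i) / μ.real (P i))
      ≤ μ.real (P i) * log ((if P i ⊆ X' then M else 1 : ℕ) : ℝ) := by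
    rw [measureReal_eq_sum_measureReal_inter hmQ hdQ hcQ (hmP i)]
    refine neg_sum_mul_log_div_sum_le (fun _ _ => measureReal_nonneg) ?_
    split_ifs with hi
    · exact (card_measureReal_inter_ne_zero_le_card_subset μ hdP hrefine i).trans (hsplit i hi)
    · obtain ⟨j₀, hj₀⟩ := hnosplit i hi
      exact hj₀ ▸ card_measureReal_inter_ne_zero_le_one μ hdQ
  calc -∑ j, ∑ i, μ.real (Q j ∩ P i) * log (μ.real (Q j ∩ P i) / μ.real (P i))
      = ∑ i, -∑ j, μ.real (Q j ∩ P i) * log (μ.real (Q j ∩ P i) / μ.real (P i)) := by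
        rw [sum_comm, sum_neg_distrib]
    _ ≤ ∑ i, μ.real (P i) * log ((if P i ⊆ X' then M else 1 : ℕ) : ℝ) :=
        sum_le_sum fun i _ => hatom i
    _ = (∑ i with P i ⊆ X', μ.real (P i)) * log M := by
        rw [sum_filter, sum_mul]
        exact sum_congr rfl fun i _ => by split_ifs <;> simp
    _ ≤ μ.real X' * log M := by
        gcongr
        exact sum_measureReal_le_of_forall_subset hmP hdP fun i hi => (mem_filter.1 hi).2

/-- If `μ` is a `T`-invariant probability measure, `𝒬 = {Q j}` is a finite
partition refining `𝒫 = {P i}`, every atom of `𝒫` contained in `X'` is split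
by `𝒬` into at most `M` pieces, and atoms of `𝒫` outside `X'` are not split,
then `H_μ(𝒬 | 𝒫) ≤ μ(X')·log M ≤ log M`. -/
theorem conditional_entropy_of_bounded_splitting {X : Type*} [MeasurableSpace X]
    (μ : Measure X) [IsProbabilityMeasure μ]
    (T : X → X) (hT : MeasurePreserving T μ μ)
    {ι κ : Type*} [Fintype ι] [Fintype κ]
    (P : ι → Set X) (Q : κ → Set X)
    (hmP : ∀ i, MeasurableSet (P i)) (hmQ : ∀ j, MeasurableSet (Q j))
    (hdP : Pairwise (Function.onFun Disjoint P))
    (hdQ : Pairwise (Function.onFun Disjoint Q))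
    (hcP : (⋃ i, P i) = Set.univ) (hcQ : (⋃ j, Q j) = Set.univ)
    (X' : Set X) (hX' : MeasurableSet X')
    (M : ℕ) (hM : 1 ≤ M)
    (hrefine : ∀ j, ∃ i, Q j ⊆ P i)
    (hsplit : ∀ i, P i ⊆ X' → Nat.card {j : κ // Q j ⊆ P i ∧ Q j ≠ ∅} ≤ M)
    (hnosplit : ∀ i, ¬P i ⊆ X' → ∃ j, Q j = P i) :
    (-∑ j, ∑ i, (μ (Q j ∩ P i)).toReal *
        Real.log ((μ (Q j ∩ P i)).toReal / (μ (P i)).toReal))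
        ≤ (μ X').toReal * Real.log M ∧
      (μ X').toReal * Real.log M ≤ Real.log M :=
  conditional_entropy_of_bounded_splitting_general μ P Q hmP hmQ hdP hdQ hcQ X' M hrefine hsplit
    hnosplit
end

section
/- Let p > 2 be prime and q an integer-valued quadratic form on a free ℤ_p-module L of rank 2. Then there exists a basis e₁, e₂ of L, units u, v ∈ ℤ_p^×, and integers 0 ≤ a ≤ b such that q(x e₁ + y e₂) = u p^a x² + v p^b y² for all x, y ∈ ℤ_p. -/
/-!
Take a basis in which `q(e₀)` has maximal norm among the entries `q(e₀)`, `q(e₁)`,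
`polar q e₀ e₁` of the Gram data; if the off-diagonal entry dominates, `e₀ + e₁` does the job by
the ultrametric inequality. Since `2` is a `p`-adic unit, `2 q(e₀)` then divides
`polar q e₀ e₁`, and one Gram–Schmidt step `e₁ ↦ e₁ - c e₀` makes the basis orthogonal without
changing `e₀` or increasing norms. Nondegeneracy makes both diagonal values nonzero, and writing
them as `unit * p ^ valuation` gives the normal form; the norm ordering gives `a ≤ b`.
-/

open QuadraticMap

namespace QuadraticMap

variable {R M : Type*} [CommRing R] [AddCommGroup M] [Module R M]

theorem map_smul_add_smul (q : QuadraticMap R M R) (x y : R) (v w : M) :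
    q (x • v + y • w) = x ^ 2 * q v + y ^ 2 * q w + x * y * polar q v w := by
  rw [QuadraticMap.map_add (⇑q), QuadraticMap.map_smul, QuadraticMap.map_smul, polar_smul_left,
    polar_smul_right]
  simp only [smul_eq_mul]
  ring

theorem apply_basis_ne_zero_of_polar_eq_zero [Nontrivial R] {ι : Type*} [Fintype ι]
    (q : QuadraticMap R M R) (hnd : ∀ x, (∀ y, polar q x y = 0) → x = 0)
    (e : Module.Basis ι R M) (i : ι)
    (horth : ∀ j ≠ i, polar q (e i) (e j) = 0) : q (e i) ≠ 0 := by
  intro hi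
  refine e.ne_zero i (hnd _ fun y => ?_)
  rw [← e.sum_repr y, ← polarBilin_apply_apply, map_sum]
  refine Finset.sum_eq_zero fun j _ => ?_
  rw [map_smul, polarBilin_apply_apply]
  obtain rfl | hj := eq_or_ne j i
  · rw [polar_self, hi, smul_zero, smul_zero]
  · rw [horth j hj, smul_zero]

end QuadraticMap

theorem Module.Basis.exists_eq_pair {R M : Type*} [CommRing R] [AddCommGroup M] [Module R M]
    (e : Module.Basis (Fin 2) R M) (a b c d : R) (h : IsUnit (a * d - b * c)) :
    ∃ e' : Module.Basis (Fin 2) R M, e' 0 = a • e 0 + c • e 1 ∧ e' 1 = b • e 0 + d • e 1 :=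
  ⟨e.map (Matrix.toLinearEquiv e !![a, b; c, d] (by simpa [Matrix.det_fin_two] using h)),
    by simp [Matrix.toLin_self, Fin.sum_univ_two], by simp [Matrix.toLin_self, Fin.sum_univ_two]⟩

namespace PadicInt

variable {p : ℕ} [Fact p.Prime]

theorem dvd_of_norm_le {a b : ℤ_[p]} (h : ‖b‖ ≤ ‖a‖) : a ∣ b := by
  obtain rfl | ha := eq_or_ne a 0
  · rw [norm_zero, norm_le_zero_iff] at h
    rw [h]
  have ha' : (a : ℚ_[p]) ≠ 0 := by rwa [Ne, PadicInt.coe_eq_zero]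
  refine ⟨⟨(b : ℚ_[p]) / a, ?_⟩, Subtype.ext ?_⟩
  · rw [norm_div, div_le_one (norm_pos_iff.mpr ha')]
    exact h
  · exact (mul_div_cancel₀ _ ha').symm

theorem valuation_le_valuation_of_norm_le {a b : ℤ_[p]} (ha : a ≠ 0) (hb : b ≠ 0)
    (h : ‖b‖ ≤ ‖a‖) : a.valuation ≤ b.valuation := by
  rwa [norm_eq_zpow_neg_valuation ha, norm_eq_zpow_neg_valuation hb,
    zpow_le_zpow_iff_right₀ (by exact_mod_cast (Fact.out : p.Prime).one_lt), neg_le_neg_iff,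
    Nat.cast_le] at h

theorem norm_two (hp : p ≠ 2) : ‖(2 : ℤ_[p])‖ = 1 := by
  exact_mod_cast norm_natCast_eq_one_iff.mpr ((Nat.coprime_primes Fact.out Nat.prime_two).mpr hp)

theorem norm_mul_le_right (a b : ℤ_[p]) : ‖a * b‖ ≤ ‖b‖ := by
  rw [norm_mul]
  exact mul_le_of_le_one_left (norm_nonneg b) (norm_le_one a)

section QuadraticForm

variable {M : Type*} [AddCommGroup M] [Module ℤ_[p] M]

theorem exists_basis_norm_polar_le (q : QuadraticForm ℤ_[p] M)
    (e : Module.Basis (Fin 2) ℤ_[p] M) :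
    ∃ e' : Module.Basis (Fin 2) ℤ_[p] M,
      ‖polar q (e' 0) (e' 1)‖ ≤ ‖q (e' 0)‖ ∧ ‖q (e' 1)‖ ≤ ‖q (e' 0)‖ := by
  rcases le_or_gt ‖polar q (e 0) (e 1)‖ (max ‖q (e 0)‖ ‖q (e 1)‖) with hC | hC
  · rcases le_total ‖q (e 1)‖ ‖q (e 0)‖ with hle | hle
    · exact ⟨e, by rwa [max_eq_left hle] at hC, hle⟩
    · obtain ⟨e', h0, h1⟩ := e.exists_eq_pair 0 1 1 0 (by simp)
      simp only [zero_smul, one_smul, zero_add, add_zero] at h0 h1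
      rw [max_eq_right hle] at hC
      exact ⟨e', by rwa [h0, h1, polar_comm], by rwa [h0, h1]⟩
  · obtain ⟨e', h0, h1⟩ := e.exists_eq_pair 1 0 1 1 (by simp)
    simp only [zero_smul, one_smul, zero_add] at h0 h1
    have hq0 : ‖q (e' 0)‖ = ‖polar q (e 0) (e 1)‖ := by
      have hdiag : ‖q (e 0) + q (e 1)‖ < ‖polar q (e 0) (e 1)‖ :=
        (nonarchimedean _ _).trans_lt hC
      rw [h0, QuadraticMap.map_add (⇑q), norm_add_eq_max_of_ne hdiag.ne, max_eq_right hdiag.le]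
    have hB : ‖q (e 1)‖ ≤ ‖q (e' 0)‖ := hq0 ▸ (le_max_right _ _).trans hC.le
    have hpolar : polar q (e' 0) (e' 1) = polar q (e 0) (e 1) + (q (e 1) + q (e 1)) := by
      rw [h0, h1, polar_add_left, polar_self, two_nsmul]
    refine ⟨e', ?_, h1 ▸ hB⟩
    rw [hpolar]
    exact (nonarchimedean _ _).trans
      (max_le hq0.ge ((nonarchimedean _ _).trans (max_le hB hB)))

theorem exists_basis_polar_eq_zero (hp : p ≠ 2) (q : QuadraticForm ℤ_[p] M)
    (e : Module.Basis (Fin 2) ℤ_[p] M) (hpolar : ‖polar q (e 0) (e 1)‖ ≤ ‖q (e 0)‖)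
    (hq : ‖q (e 1)‖ ≤ ‖q (e 0)‖) :
    ∃ e' : Module.Basis (Fin 2) ℤ_[p] M,
      polar q (e' 0) (e' 1) = 0 ∧ ‖q (e' 1)‖ ≤ ‖q (e' 0)‖ := by
  obtain ⟨c, hc⟩ : 2 * q (e 0) ∣ polar q (e 0) (e 1) :=
    dvd_of_norm_le (by rwa [norm_mul, norm_two hp, one_mul])
  obtain ⟨e', h0, h1⟩ := e.exists_eq_pair 1 (-c) 0 1 (by simp)
  simp only [zero_smul, one_smul, add_zero] at h0 h1
  refine ⟨e', ?_, ?_⟩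
  · rw [h0, h1, polar_add_right, polar_smul_right, polar_self, hc, smul_eq_mul, nsmul_eq_mul]
    push_cast
    ring
  · rw [h0, h1, ← one_smul ℤ_[p] (e 1), map_smul_add_smul]
    refine (nonarchimedean _ _).trans (max_le ((nonarchimedean _ _).trans (max_le ?_ ?_)) ?_)
    · exact norm_mul_le_right _ _
    · rwa [one_pow, one_mul]
    · exact (norm_mul_le_right _ _).trans hpolar

theorem exists_units_of_polar_eq_zero (q : QuadraticForm ℤ_[p] M)
    (e : Module.Basis (Fin 2) ℤ_[p] M) (horth : polar q (e 0) (e 1) = 0)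
    (h0 : q (e 0) ≠ 0) (h1 : q (e 1) ≠ 0) (hle : ‖q (e 1)‖ ≤ ‖q (e 0)‖) :
    ∃ (u v : ℤ_[p]ˣ) (a b : ℕ), a ≤ b ∧ ∀ x y : ℤ_[p],
      q (x • e 0 + y • e 1) = u * (p : ℤ_[p]) ^ a * x ^ 2 + v * (p : ℤ_[p]) ^ b * y ^ 2 := by
  refine ⟨unitCoeff h0, unitCoeff h1, _, _, valuation_le_valuation_of_norm_le h0 h1 hle,
    fun x y => ?_⟩
  rw [map_smul_add_smul, horth]
  linear_combination x ^ 2 * unitCoeff_spec h0 + y ^ 2 * unitCoeff_spec h1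

end QuadraticForm

end PadicInt

/-- For `p > 2`, a nondegenerate `ℤ_p`-valued quadratic form on a free rank-2
`ℤ_p`-module can be diagonalized: in a suitable basis it takes the shape
`u p^a x² + v p^b y²` with `u, v ∈ ℤ_p^×` and `0 ≤ a ≤ b`. -/
theorem quadratic_form_diagonalization_padic (p : ℕ) [Fact p.Prime] (hp : 2 < p)
    (q : QuadraticForm ℤ_[p] (Fin 2 → ℤ_[p]))
    (hnd : ∀ x : Fin 2 → ℤ_[p],
      (∀ y : Fin 2 → ℤ_[p], QuadraticMap.polar (⇑q) x y = 0) → x = 0) :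
    ∃ (e : Module.Basis (Fin 2) ℤ_[p] (Fin 2 → ℤ_[p])) (u v : ℤ_[p]ˣ) (a b : ℕ),
      a ≤ b ∧
      ∀ x y : ℤ_[p],
        q (x • e 0 + y • e 1) =
          (u : ℤ_[p]) * (p : ℤ_[p]) ^ a * x ^ 2 +
            (v : ℤ_[p]) * (p : ℤ_[p]) ^ b * y ^ 2 := by
  obtain ⟨e, hpolar, hle⟩ := PadicInt.exists_basis_norm_polar_le q (Pi.basisFun ℤ_[p] (Fin 2))
  obtain ⟨e', horth, hle'⟩ := PadicInt.exists_basis_polar_eq_zero hp.ne' q e hpolar hle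
  have hne : ∀ i, q (e' i) ≠ 0 := fun i => q.apply_basis_ne_zero_of_polar_eq_zero hnd e' i
    (by fin_cases i <;> simp [Fin.forall_fin_two, horth, polar_comm])
  exact ⟨e', PadicInt.exists_units_of_polar_eq_zero q e' horth (hne 0) (hne 1) hle'⟩
end
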